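/- arXiv:2011.15032 — 2 statements merged into one kernel-verified Lean document; each statement's English description precedes it below -/
import Mathlib

section
/- In B = A⟨X⟩, the derivative operator commutes with the differential up to sign: d/dX(d^B b) = (-1)^{|X|} d^B(db/dX) for all b ∈ B. -/
/-! Both sides are additive in `b`, so it suffices to compare them on the `A`-spanning elements
`X^{(i)} a` (resp. `a₀ + X a₁`), where it is a direct computation from the formulas for `d` and
`d/dX`; in the even case the two `t`-terms produced by `d` match after lowering `X^{(i)}`. -/

section DividedPowers

variable {R B : Type} [CommRing R] [Ring B] [Algebra R B] {A : Subalgebra R B} {t : B}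
  {d DX : B →ₗ[R] B} {Xp : ℕ → B}

theorem DX_d_dividedPower_mul (hdA : ∀ a ∈ A, d a ∈ A) (ht : t ∈ A) (hXp0 : Xp 0 = 1)
    (hDXA : ∀ a ∈ A, DX a = 0)
    (hDXp : ∀ m : ℕ, ∀ a ∈ A, DX (Xp (m + 1) * a) = Xp m * a)
    (hdXp : ∀ m : ℕ, ∀ a ∈ A, d (Xp (m + 1) * a) = Xp m * (t * a) + Xp (m + 1) * d a)
    (i : ℕ) {a : B} (ha : a ∈ A) : DX (d (Xp i * a)) = d (DX (Xp i * a)) := by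
  have hta : t * a ∈ A := A.mul_mem ht ha
  rcases i with _ | _ | m
  · rw [hXp0, one_mul, hDXA _ ha, map_zero, hDXA _ (hdA _ ha)]
  · rw [hdXp 0 _ ha, map_add, hXp0, one_mul, hDXA _ hta, zero_add, hDXp 0 _ (hdA _ ha),
      hDXp 0 _ ha, hXp0, one_mul, one_mul]
  · rw [hdXp (m + 1) _ ha, map_add, hDXp m _ hta, hDXp (m + 1) _ (hdA _ ha), hDXp (m + 1) _ ha,
      hdXp m _ ha]

theorem DX_d_eq_of_dividedPowerPresentation (hdA : ∀ a ∈ A, d a ∈ A) (ht : t ∈ A)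
    (hXp0 : Xp 0 = 1)
    (hDXA : ∀ a ∈ A, DX a = 0)
    (hDXp : ∀ m : ℕ, ∀ a ∈ A, DX (Xp (m + 1) * a) = Xp m * a)
    (hdXp : ∀ m : ℕ, ∀ a ∈ A, d (Xp (m + 1) * a) = Xp m * (t * a) + Xp (m + 1) * d a)
    (hrep : ∀ b : B, ∃ c : ℕ →₀ B, (∀ i, c i ∈ A) ∧ b = c.sum fun i a => Xp i * a) (b : B) :
    DX (d b) = d (DX b) := by
  obtain ⟨c, hcA, rfl⟩ := hrep b
  simp only [map_finsuppSum]
  exact Finsupp.sum_congr fun i _ ↦ DX_d_dividedPower_mul hdA ht hXp0 hDXA hDXp hdXp i (hcA i)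

end DividedPowers

theorem DX_d_eq_neg_of_exteriorPresentation {R B : Type} [CommRing R] [Ring B] [Algebra R B]
    {A : Subalgebra R B} {X t : B} {d DX : B →ₗ[R] B} (hdA : ∀ a ∈ A, d a ∈ A) (ht : t ∈ A)
    (hDX : ∀ a₀ ∈ A, ∀ a₁ ∈ A, DX (a₀ + X * a₁) = a₁)
    (hd : ∀ a₀ ∈ A, ∀ a₁ ∈ A, d (a₀ + X * a₁) = d a₀ + t * a₁ - X * d a₁)
    (hrep : ∀ b : B, ∃ a₀ ∈ A, ∃ a₁ ∈ A, b = a₀ + X * a₁) (b : B) :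
    DX (d b) = -d (DX b) := by
  obtain ⟨a₀, ha₀, a₁, ha₁, rfl⟩ := hrep b
  have hdb : d (a₀ + X * a₁) = (d a₀ + t * a₁) + X * -d a₁ := by
    rw [hd _ ha₀ _ ha₁, mul_neg, sub_eq_add_neg]
  rw [hdb, hDX _ (A.add_mem (hdA _ ha₀) (A.mul_mem ht ha₁)) _ (A.neg_mem (hdA _ ha₁)),
    hDX _ ha₀ _ ha₁]

theorem derivative_commutes_with_differential_general
    {R B : Type} [CommRing R] [Ring B] [Algebra R B]
    (A : Subalgebra R B) (X t : B) (degX : ℤ)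
    (d : B →ₗ[R] B)
    (hdA : ∀ a ∈ A, d a ∈ A) (ht : t ∈ A)
    (DX : B →ₗ[R] B)
    (hcase :
      (Even degX ∧ ∃ Xp : ℕ → B, Xp 0 = 1 ∧ Xp 1 = X ∧
        (∀ a ∈ A, DX a = 0) ∧
        (∀ m : ℕ, ∀ a ∈ A, DX (Xp (m + 1) * a) = Xp m * a) ∧
        (∀ m : ℕ, ∀ a ∈ A, d (Xp (m + 1) * a) = Xp m * (t * a) + Xp (m + 1) * d a) ∧
        (∀ b : B, ∃ c : ℕ →₀ B, (∀ i, c i ∈ A) ∧ b = c.sum fun i a => Xp i * a))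
      ∨
      (Odd degX ∧ X * X = 0 ∧
        (∀ a₀ ∈ A, ∀ a₁ ∈ A, DX (a₀ + X * a₁) = a₁) ∧
        (∀ a₀ ∈ A, ∀ a₁ ∈ A, d (a₀ + X * a₁) = d a₀ + t * a₁ - X * d a₁) ∧
        (∀ b : B, ∃ a₀ ∈ A, ∃ a₁ ∈ A, b = a₀ + X * a₁))) :
    ∀ b : B, DX (d b) = ((degX.negOnePow : ℤˣ) : ℤ) • d (DX b) := by
  intro b
  rcases hcase with ⟨heven, Xp, hXp0, -, hDXA, hDXp, hdXp, hrep⟩ | ⟨hodd, -, hDX, hd, hrep⟩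
  · rw [Int.negOnePow_even _ heven, Units.val_one, one_smul]
    exact DX_d_eq_of_dividedPowerPresentation hdA ht hXp0 hDXA hDXp hdXp hrep b
  · rw [Int.negOnePow_odd _ hodd, Units.val_neg, Units.val_one, neg_one_smul]
    exact DX_d_eq_neg_of_exteriorPresentation hdA ht hDX hd hrep b

/-- In `B = A⟨X | dX = t⟩` (either parity of `|X|`), the
derivative operator commutes with the differential up to sign:
`d/dX(d^B b) = (-1)^{|X|} d^B(db/dX)` for all `b ∈ B`. -/
theorem derivative_commutes_with_differential
    {R B : Type} [CommRing R] [Ring B] [Algebra R B]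
    (A : Subalgebra R B) (X t : B) (degX : ℤ)
    (d : B →ₗ[R] B)
    (hdA : ∀ a ∈ A, d a ∈ A) (ht : t ∈ A) (hdXt : d X = t) (hdt : d t = 0)
    (DX : B →ₗ[R] B)
    (hcase :
      (Even degX ∧ ∃ Xp : ℕ → B, Xp 0 = 1 ∧ Xp 1 = X ∧
        (∀ a ∈ A, DX a = 0) ∧
        (∀ m : ℕ, ∀ a ∈ A, DX (Xp (m + 1) * a) = Xp m * a) ∧
        (∀ m : ℕ, ∀ a ∈ A, d (Xp (m + 1) * a) = Xp m * (t * a) + Xp (m + 1) * d a) ∧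
        (∀ b : B, ∃ c : ℕ →₀ B, (∀ i, c i ∈ A) ∧ b = c.sum fun i a => Xp i * a))
      ∨
      (Odd degX ∧ X * X = 0 ∧
        (∀ a₀ ∈ A, ∀ a₁ ∈ A, DX (a₀ + X * a₁) = a₁) ∧
        (∀ a₀ ∈ A, ∀ a₁ ∈ A, d (a₀ + X * a₁) = d a₀ + t * a₁ - X * d a₁) ∧
        (∀ b : B, ∃ a₀ ∈ A, ∃ a₁ ∈ A, b = a₀ + X * a₁))) :
    ∀ b : B, DX (d b) = ((degX.negOnePow : ℤˣ) : ℤ) • d (DX b) :=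
  derivative_commutes_with_differential_general A X t degX d hdA ht DX hcase
end

section
/- Let D be the set of R-linear maps φ : N → N for which there exists a B-linear g_φ ∈ E with [φ, ℓ_b] = g_φ ∘ ℓ_{d^B b} for all b ∈ B. Then for any fixed ∂ ∈ Diff_B(N), one has D = E + E∘∂ = ∂∘E + E; that is, every element of D can be written as f + g∘∂ and also as f' + ∂∘g' with f, g, f', g' ∈ E. -/
/-!
Common framework: `B` is a (strongly graded-commutative) DG `R`-algebra with grading
`𝒜 : ℤ → Submodule R B` and differential `d : B →ₗ[R] B`; `N` is a graded free right
`B`-module with right action `ρ : N →ₗ[R] B →ₗ[R] N` and grading `𝒩 : ℤ → Submodule R N`.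
-/

namespace DGJ

variable {R B N Λ : Type} [CommRing R] [Ring B] [Algebra R B]
  [AddCommGroup N] [Module R N]

/-- The graded commutator `[f,g] = f∘g - (-1)^{pq} g∘f` of maps of degrees `p` and `q`. -/
def gbr (f : N →ₗ[R] N) (p : ℤ) (g : N →ₗ[R] N) (q : ℤ) : N →ₗ[R] N :=
  f ∘ₗ g - (((p * q).negOnePow : ℤˣ) : ℤ) • (g ∘ₗ f)

/-- `f` is a graded map of degree `p` for the grading `𝒩`. -/
def IsGraded (𝒩 : ℤ → Submodule R N) (f : N →ₗ[R] N) (p : ℤ) : Prop :=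
  ∀ i, ∀ x ∈ 𝒩 i, f x ∈ 𝒩 (i + p)

/-- `f` is right `B`-linear with respect to the right action `ρ`. -/
def RLin (ρ : N →ₗ[R] B →ₗ[R] N) (f : N →ₗ[R] N) : Prop :=
  ∀ (x : N) (b : B), f (ρ x b) = ρ (f x) b

/-- `L` is the left-multiplication operator `ℓ_b` for a homogeneous `b` of degree `j`:
`ℓ_b x = (-1)^{|x||b|} x·b` on homogeneous `x`. -/
def IsLMul (𝒜 : ℤ → Submodule R B) (𝒩 : ℤ → Submodule R N) (ρ : N →ₗ[R] B →ₗ[R] N)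
    (j : ℤ) (b : B) (L : N →ₗ[R] N) : Prop :=
  b ∈ 𝒜 j ∧ ∀ i, ∀ x ∈ 𝒩 i, L x = (((i * j).negOnePow : ℤˣ) : ℤ) • ρ x b

/-- `D ∈ Diff_B(N)`: degree `-1` and the Leibniz rule with respect to `d = d^B`. -/
def IsDiff (𝒩 : ℤ → Submodule R N) (ρ : N →ₗ[R] B →ₗ[R] N) (d : B →ₗ[R] B)
    (D : N →ₗ[R] N) : Prop :=
  IsGraded 𝒩 D (-1) ∧
    ∀ i, ∀ x ∈ 𝒩 i, ∀ b : B, D (ρ x b) = ρ (D x) b + ((i.negOnePow : ℤˣ) : ℤ) • ρ x (d b)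

/-- `f ∈ E = End*_B(N)` (homogeneous of degree `p`), characterized by `[f, ℓ_b] = 0`
for all homogeneous `b ∈ B`. -/
def MemE (𝒜 : ℤ → Submodule R B) (𝒩 : ℤ → Submodule R N) (ρ : N →ₗ[R] B →ₗ[R] N)
    (f : N →ₗ[R] N) (p : ℤ) : Prop :=
  IsGraded 𝒩 f p ∧ ∀ j b L, IsLMul 𝒜 𝒩 ρ j b L → gbr f p L j = 0

/-- `φ ∈ D` (homogeneous of degree `m`): there is `g_φ ∈ E` with `[φ, ℓ_b] = g_φ ∘ ℓ_{d b}`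
for all homogeneous `b ∈ B`. -/
def MemD (𝒜 : ℤ → Submodule R B) (𝒩 : ℤ → Submodule R N) (ρ : N →ₗ[R] B →ₗ[R] N)
    (d : B →ₗ[R] B) (φ : N →ₗ[R] N) (m : ℤ) : Prop :=
  IsGraded 𝒩 φ m ∧ ∃ g : N →ₗ[R] N, MemE 𝒜 𝒩 ρ g (m + 1) ∧
    ∀ j b L Ldb, IsLMul 𝒜 𝒩 ρ j b L → IsLMul 𝒜 𝒩 ρ (j - 1) (d b) Ldb →
      gbr φ m L j = g ∘ₗ Ldb

/-- `e : Λ → N` is a basis of `N` as a free right `B`-module. -/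
def IsBasis (ρ : N →ₗ[R] B →ₗ[R] N) (e : Λ → N) : Prop :=
  Function.Bijective (fun c : Λ →₀ B => c.sum fun l b => ρ (e l) b)

/-- `c` is a matrix of coefficients for `f` with respect to the basis `e`:
`f(e_λ) = Σ_μ e_μ b_{μλ}`. -/
def IsMatrixOf (ρ : N →ₗ[R] B →ₗ[R] N) (e : Λ → N) (c : Λ → Λ →₀ B)
    (f : N →ₗ[R] N) : Prop :=
  ∀ l, f (e l) = (c l).sum fun m b => ρ (e m) b

/-- `jf` acts on the basis as the `j`-operator applied to the matrix `c`:
`jf(e_λ) = Σ_μ (-1)^{|e_μ||X|} e_μ (d b_{μλ}/dX)`. -/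
def IsJOf (ρ : N →ₗ[R] B →ₗ[R] N) (e : Λ → N) (degE : Λ → ℤ) (degX : ℤ)
    (dX : B →ₗ[R] B) (c : Λ → Λ →₀ B) (jf : N →ₗ[R] N) : Prop :=
  ∀ l, jf (e l) = (c l).sum fun m b =>
    (((degE m * degX).negOnePow : ℤˣ) : ℤ) • ρ (e m) (dX b)

/-- `jf = j_X^𝓑(f)`: the restricted `j`-operator with respect to the basis `e`. -/
def IsRestrictedJ (ρ : N →ₗ[R] B →ₗ[R] N) (e : Λ → N) (degE : Λ → ℤ) (degX : ℤ)
    (dX : B →ₗ[R] B) (f jf : N →ₗ[R] N) : Prop :=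
  RLin ρ jf ∧ ∃ c, IsMatrixOf ρ e c f ∧ IsJOf ρ e degE degX dX c jf

/-- `jα = j_X^𝓑(α)` for `α ∈ D = E + ∂∘E`, via `j(f + ∂g) = j(f) + j(∂)g + (-1)^{|X|} ∂ j(g)`. -/
def IsJD (ρ : N →ₗ[R] B →ₗ[R] N) (e : Λ → N) (degE : Λ → ℤ) (degX : ℤ)
    (dX : B →ₗ[R] B) (Dd : N →ₗ[R] N) (α jα : N →ₗ[R] N) : Prop :=
  ∃ f g jf jg jD, RLin ρ f ∧ RLin ρ g ∧
    IsRestrictedJ ρ e degE degX dX f jf ∧ IsRestrictedJ ρ e degE degX dX g jg ∧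
    IsRestrictedJ ρ e degE degX dX Dd jD ∧
    α = f + Dd ∘ₗ g ∧
    jα = jf + jD ∘ₗ g + ((degX.negOnePow : ℤˣ) : ℤ) • (Dd ∘ₗ jg)

/-- The derivative operator `d/dX` satisfies the (graded) Leibniz rule on `B`. -/
def DerivLeibniz (𝒜 : ℤ → Submodule R B) (degX : ℤ) (dX : B →ₗ[R] B) : Prop :=
  ∀ i, ∀ b ∈ 𝒜 i, ∀ b' : B,
    dX (b * b') = dX b * b' + (((i * degX).negOnePow : ℤˣ) : ℤ) • (b * dX b')

/-- `B` is strongly graded-commutative. -/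
def GradedComm (𝒜 : ℤ → Submodule R B) : Prop :=
  ∀ i j, ∀ a ∈ 𝒜 i, ∀ b ∈ 𝒜 j, a * b = (((i * j).negOnePow : ℤˣ) : ℤ) • (b * a)

/-- the differential `d^B` has degree `-1`. -/
def DGraded (𝒜 : ℤ → Submodule R B) (d : B →ₗ[R] B) : Prop :=
  ∀ j, ∀ b ∈ 𝒜 j, d b ∈ 𝒜 (j - 1)

/-- The Leibniz rule for `d^B`. -/
def DLeibniz (𝒜 : ℤ → Submodule R B) (d : B →ₗ[R] B) : Prop :=
  ∀ i, ∀ a ∈ 𝒜 i, ∀ b : B, d (a * b) = d a * b + ((i.negOnePow : ℤˣ) : ℤ) • (a * d b)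

/-- The right action is unital, associative and graded. -/
def GoodAction (𝒜 : ℤ → Submodule R B) (𝒩 : ℤ → Submodule R N)
    (ρ : N →ₗ[R] B →ₗ[R] N) : Prop :=
  (∀ x : N, ρ x 1 = x) ∧ (∀ (x : N) (b b' : B), ρ (ρ x b) b' = ρ x (b * b')) ∧
  (∀ i j, ∀ x ∈ 𝒩 i, ∀ b ∈ 𝒜 j, ρ x b ∈ 𝒩 (i + j))

/-- `N` is generated by its homogeneous elements. -/
def GradingSpansN (𝒩 : ℤ → Submodule R N) : Prop := (⨆ i, 𝒩 i) = ⊤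


private lemma eps_eps (k : ℤ) (x : N →ₗ[R] N) :
    ((k.negOnePow : ℤˣ) : ℤ) • ((k.negOnePow : ℤˣ) : ℤ) • x = x := by
  rw [smul_smul, ← Units.val_mul, Int.units_mul_self, Units.val_one, one_smul]

private lemma gbr_sub (f f' L : N →ₗ[R] N) (p j : ℤ) :
    gbr (f - f') p L j = gbr f p L j - gbr f' p L j := by
  simp only [gbr, LinearMap.sub_comp, LinearMap.comp_sub, smul_sub]; abel

private lemma gbr_add (f f' L : N →ₗ[R] N) (p j : ℤ) :
    gbr (f + f') p L j = gbr f p L j + gbr f' p L j := by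
  simp only [gbr, LinearMap.add_comp, LinearMap.comp_add, smul_add]; abel

private lemma gbr_smul (c : ℤ) (f L : N →ₗ[R] N) (p j : ℤ) :
    gbr (c • f) p L j = c • gbr f p L j := by
  ext x
  simp only [gbr, LinearMap.sub_apply, LinearMap.comp_apply, LinearMap.smul_apply,
    smul_sub]
  rw [map_zsmul, smul_comm]

private lemma comp_zsmul (f g : N →ₗ[R] N) (c : ℤ) :
    f ∘ₗ (c • g) = c • (f ∘ₗ g) := by
  ext x; simp

private lemma gbr_comp_dd (g Dd L Ldb : N →ₗ[R] N) (m j : ℤ)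
    (hgL : g ∘ₗ L = ((((m + 1) * j).negOnePow : ℤˣ) : ℤ) • (L ∘ₗ g))
    (hDL : Dd ∘ₗ L = Ldb + (((-1 * j).negOnePow : ℤˣ) : ℤ) • (L ∘ₗ Dd)) :
    gbr (g ∘ₗ Dd) m L j = g ∘ₗ Ldb := by
  ext x
  have hD := DFunLike.congr_fun hDL x
  have hg := DFunLike.congr_fun hgL (Dd x)
  simp only [LinearMap.comp_apply, LinearMap.add_apply, LinearMap.smul_apply] at hD hg
  simp only [gbr, LinearMap.sub_apply, LinearMap.comp_apply, LinearMap.smul_apply]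
  rw [hD, map_add, map_zsmul, hg, smul_smul, ← Units.val_mul, ← Int.negOnePow_add]
  have h : -1 * j + (m + 1) * j = m * j := by ring
  rw [h]; abel

private lemma gbr_dd_comp (g Dd L Ldb : N →ₗ[R] N) (m j : ℤ)
    (hgL : g ∘ₗ L = ((((m + 1) * j).negOnePow : ℤˣ) : ℤ) • (L ∘ₗ g))
    (hgLdb : g ∘ₗ Ldb = ((((m + 1) * (j - 1)).negOnePow : ℤˣ) : ℤ) • (Ldb ∘ₗ g))
    (hDL : Dd ∘ₗ L = Ldb + (((-1 * j).negOnePow : ℤˣ) : ℤ) • (L ∘ₗ Dd)) :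
    gbr (Dd ∘ₗ g) m L j = (((m + 1).negOnePow : ℤˣ) : ℤ) • (g ∘ₗ Ldb) := by
  ext x
  have hg := DFunLike.congr_fun hgL x
  have hD := DFunLike.congr_fun hDL (g x)
  have hg2 := DFunLike.congr_fun hgLdb x
  simp only [LinearMap.comp_apply, LinearMap.add_apply, LinearMap.smul_apply] at hg hD hg2
  simp only [gbr, LinearMap.sub_apply, LinearMap.comp_apply, LinearMap.smul_apply]
  rw [hg, map_zsmul, hD, smul_add, smul_smul, ← Units.val_mul, ← Int.negOnePow_add,
    hg2, smul_smul, ← Units.val_mul, ← Int.negOnePow_add]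
  have h1 : (m + 1) * j + -1 * j = m * j := by ring
  have h2 : m + 1 + (m + 1) * (j - 1) = (m + 1) * j := by ring
  rw [h1, h2]; abel

private lemma comm_of_memE {𝒜 : ℤ → Submodule R B} {𝒩 : ℤ → Submodule R N}
    {ρ : N →ₗ[R] B →ₗ[R] N} {g : N →ₗ[R] N} {p : ℤ}
    (hE : MemE 𝒜 𝒩 ρ g p) {j : ℤ} {b : B} {L : N →ₗ[R] N}
    (hL : IsLMul 𝒜 𝒩 ρ j b L) :
    g ∘ₗ L = (((p * j).negOnePow : ℤˣ) : ℤ) • (L ∘ₗ g) := by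
  have h := hE.2 j b L hL
  rw [gbr] at h
  exact sub_eq_zero.mp h

/-- For a fixed differential `∂ ∈ Diff_B(N)`, one has
`D = E + E∘∂ = ∂∘E + E`: a homogeneous `φ` of degree `m` belongs to `D`
(i.e. `[φ, ℓ_b] = g_φ ∘ ℓ_{d^B b}` for some `g_φ ∈ E`) if and only if
`φ = f + g∘∂` for some `f, g ∈ E` and also `φ = f' + ∂∘g'` for some `f', g' ∈ E`. -/
theorem memD_iff_decomposition
    {R B N : Type} [CommRing R] [Ring B] [Algebra R B] [AddCommGroup N] [Module R N]
    (𝒜 : ℤ → Submodule R B) (𝒩 : ℤ → Submodule R N) (ρ : N →ₗ[R] B →ₗ[R] N)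
    (d : B →ₗ[R] B) (hdne : d ≠ 0)
    (hact : GoodAction 𝒜 𝒩 ρ) (hspanN : GradingSpansN 𝒩)
    (hdgr : DGraded 𝒜 d)
    (hLex : ∀ j b, b ∈ 𝒜 j → ∃ L, IsLMul 𝒜 𝒩 ρ j b L)
    (Dd : N →ₗ[R] N) (hDdgr : IsGraded 𝒩 Dd (-1))
    (hDd : ∀ j b L Ldb, IsLMul 𝒜 𝒩 ρ j b L → IsLMul 𝒜 𝒩 ρ (j - 1) (d b) Ldb →
        gbr Dd (-1) L j = Ldb)
    (φ : N →ₗ[R] N) (m : ℤ) (hφgr : IsGraded 𝒩 φ m) :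
    MemD 𝒜 𝒩 ρ d φ m ↔
      ((∃ f g, MemE 𝒜 𝒩 ρ f m ∧ MemE 𝒜 𝒩 ρ g (m + 1) ∧ φ = f + g ∘ₗ Dd) ∧
       (∃ f' g', MemE 𝒜 𝒩 ρ f' m ∧ MemE 𝒜 𝒩 ρ g' (m + 1) ∧ φ = f' + Dd ∘ₗ g')) := by

  have hDLgen : ∀ j b (L Ldb : N →ₗ[R] N), IsLMul 𝒜 𝒩 ρ j b L →
      IsLMul 𝒜 𝒩 ρ (j - 1) (d b) Ldb →
      Dd ∘ₗ L = Ldb + (((-1 * j).negOnePow : ℤˣ) : ℤ) • (L ∘ₗ Dd) := by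
    intro j b L Ldb hL hLdb
    have h := hDd j b L Ldb hL hLdb
    rw [gbr] at h
    rw [← h]; abel
  constructor
  · rintro ⟨-, g, hgE, hg⟩
    have hfgr : IsGraded 𝒩 (φ - g ∘ₗ Dd) m := by
      intro i x hx
      have h1 : (i + -1) + (m + 1) = i + m := by ring
      refine sub_mem (hφgr i x hx) ?_
      have := hgE.1 (i + -1) (Dd x) (hDdgr i x hx)
      rwa [h1] at this
    have key : ∀ j b (L : N →ₗ[R] N), IsLMul 𝒜 𝒩 ρ j b L →
        ∃ Ldb, IsLMul 𝒜 𝒩 ρ (j - 1) (d b) Ldb := by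
      intro j b L hL
      exact hLex (j - 1) (d b) (hdgr j b hL.1)
    constructor
    · refine ⟨φ - g ∘ₗ Dd, g, ⟨hfgr, ?_⟩, hgE, by abel⟩
      intro j b L hL
      obtain ⟨Ldb, hLdb⟩ := key j b L hL
      rw [gbr_sub, hg j b L Ldb hL hLdb,
        gbr_comp_dd g Dd L Ldb m j (comm_of_memE hgE hL) (hDLgen j b L Ldb hL hLdb),
        sub_self]
    · set c : ℤ := (((m + 1).negOnePow : ℤˣ) : ℤ) with hc
      have hg'E : MemE 𝒜 𝒩 ρ (c • g) (m + 1) := by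
        refine ⟨fun i x hx => ?_, fun j b L hL => ?_⟩
        · exact zsmul_mem (hgE.1 i x hx) c
        · rw [gbr_smul, hgE.2 j b L hL, smul_zero]
      refine ⟨φ - Dd ∘ₗ (c • g), c • g, ⟨?_, ?_⟩, hg'E, by abel⟩
      · intro i x hx
        have h1 : (i + (m + 1)) + -1 = i + m := by ring
        refine sub_mem (hφgr i x hx) ?_
        have := hDdgr (i + (m + 1)) _ (hg'E.1 i x hx)
        rwa [h1] at this
      · intro j b L hL
        obtain ⟨Ldb, hLdb⟩ := key j b L hL
        rw [gbr_sub, hg j b L Ldb hL hLdb, comp_zsmul, gbr_smul,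
          gbr_dd_comp g Dd L Ldb m j (comm_of_memE hgE hL) (comm_of_memE hgE hLdb)
            (hDLgen j b L Ldb hL hLdb), hc, eps_eps, sub_self]
  · rintro ⟨⟨f, g, hfE, hgE, hφ⟩, -⟩
    refine ⟨hφgr, g, hgE, fun j b L Ldb hL hLdb => ?_⟩
    rw [hφ, gbr_add, hfE.2 j b L hL,
      gbr_comp_dd g Dd L Ldb m j (comm_of_memE hgE hL) (hDLgen j b L Ldb hL hLdb),
      zero_add]

end DGJ
end
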